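/- For every positive integer n, the number of 2-Stirling permutations of size n equals the double factorial (2n−1)!! = 1·3·5⋯(2n−1). -/

import Mathlib

/-!
In a 2-Stirling permutation of size `n + 1` the two copies of `n + 1` are adjacent, since
anything between them would have to be at least `n + 1`; deleting them leaves a 2-Stirling
permutation of size `n`. Conversely, the block `(n + 1) (n + 1)` can be inserted into any of the
`2n + 1` gaps of a 2-Stirling permutation of size `n`, and the result determines both the smaller
permutation and the gap. So each step multiplies the count by `2n + 1`, starting from the empty
permutation.
-/

/-- `π` is a `b`-Stirling permutation of size `n`: a sequence of length `b*n`
over `{1,…,n}` in which every value appears exactly `b` times, and whenever a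
value occurs between two occurrences of a value `i`, it is `≥ i`. -/
def IsStirling (b n : ℕ) (π : List ℕ) : Prop :=
  π.length = b * n ∧
  (∀ v, 1 ≤ v → v ≤ n → π.count v = b) ∧
  (∀ v, v ∈ π → 1 ≤ v ∧ v ≤ n) ∧
  ∀ p q r : Fin π.length, p < q → q < r → π.get p = π.get r → π.get p ≤ π.get q

namespace List

variable {α : Type*}

theorem forall_get_le_iff_forall_sublist [LE α] (l : List α) :
    (∀ p q r : Fin l.length, p < q → q < r → l.get p = l.get r → l.get p ≤ l.get q) ↔
      ∀ x y, [x, y, x] <+ l → x ≤ y := by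
  constructor
  · intro h x y hsub
    obtain ⟨is, hmap, hpair⟩ := sublist_eq_map_getElem hsub
    rcases is with _ | ⟨p, _ | ⟨q, _ | ⟨r, _ | _⟩⟩⟩ <;> simp only [map_cons, map_nil,
      reduceCtorEq, cons.injEq, and_false, and_true] at hmap
    obtain ⟨rfl, rfl, hr⟩ := hmap
    simp only [pairwise_cons, mem_cons, forall_eq_or_imp, not_mem_nil, IsEmpty.forall_iff,
      implies_true, Pairwise.nil, and_true] at hpair
    exact h p q r hpair.1.1 hpair.2 hr
  · intro h p q r hpq hqr heq
    have hpair : [p, q, r].Pairwise fun a b : Fin l.length => (a : ℕ) < b := by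
      simp only [pairwise_cons, mem_cons, forall_eq_or_imp, not_mem_nil, IsEmpty.forall_iff,
        implies_true, Pairwise.nil, and_true]
      exact ⟨⟨hpq, hpq.trans hqr⟩, hqr⟩
    have hsub : [l.get p, l.get q, l.get r] <+ l := map_getElem_sublist hpair
    exact h _ _ (heq ▸ hsub)

theorem exists_eq_append_cons_append_cons_of_sublist {x y : α} {l : List α} (h : [x, y] <+ l) :
    ∃ A C B, l = A ++ x :: (C ++ y :: B) := by
  obtain ⟨r₁, r₂, rfl, hx, hy⟩ := cons_sublist_iff.1 h
  obtain ⟨A, C₁, rfl⟩ := append_of_mem hx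
  obtain ⟨C₂, B, rfl⟩ := append_of_mem (singleton_sublist.1 hy)
  exact ⟨A, C₁ ++ C₂, B, by simp⟩

theorem cons_sublist_append_iff_of_notMem {a : α} {s A t : List α} (h : a ∉ A) :
    a :: s <+ A ++ t ↔ a :: s <+ t := by
  induction A with
  | nil => rfl
  | cons b A ih =>
    rw [mem_cons, not_or] at h
    rw [cons_append, sublist_cons_iff, ih h.2]
    simp [h.1]

def insertPair (a : α) (k : ℕ) (l : List α) : List α := l.take k ++ a :: a :: l.drop k

theorem insertPair_length_append (a : α) (A B : List α) :
    insertPair a A.length (A ++ B) = A ++ a :: a :: B := by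
  simp [insertPair]

theorem perm_insertPair (a : α) (k : ℕ) (l : List α) : insertPair a k l ~ a :: a :: l := by
  calc insertPair a k l ~ a :: (l.take k ++ a :: l.drop k) := perm_middle
    _ ~ a :: a :: (l.take k ++ l.drop k) := perm_middle.cons a
    _ = a :: a :: l := by rw [take_append_drop]

theorem not_sublist_insertPair {a y : α} {l : List α} (h : a ∉ l) (k : ℕ) :
    ¬ [a, y, a] <+ insertPair a k l := by
  intro hsub
  rw [insertPair, cons_sublist_append_iff_of_notMem fun hm => h (mem_of_mem_take hm)] at hsub
  exact h (mem_of_mem_drop (singleton_sublist.1 (hsub.tail.tail)))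

section DecidableEq

variable [DecidableEq α]

theorem filter_ne_insertPair {a : α} {l : List α} (h : a ∉ l) (k : ℕ) :
    (insertPair a k l).filter (· ≠ a) = l := by
  rw [insertPair, filter_append, filter_cons_of_neg (by simp), filter_cons_of_neg (by simp),
    ← filter_append, take_append_drop]
  exact filter_eq_self.2 fun x hx => by simpa using ne_of_mem_of_not_mem hx h

theorem idxOf_insertPair {a : α} {l : List α} (h : a ∉ l) {k : ℕ} (hk : k ≤ l.length) :
    (insertPair a k l).idxOf a = k := by
  rw [insertPair, idxOf_append_of_notMem fun hm => h (mem_of_mem_take hm), idxOf_cons_self,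
    length_take_of_le hk, add_zero]

end DecidableEq

theorem insertPair_inj {a : α} {l l' : List α} {k k' : ℕ} (h : a ∉ l) (h' : a ∉ l')
    (hk : k ≤ l.length) (hk' : k' ≤ l'.length) :
    insertPair a k l = insertPair a k' l' ↔ l = l' ∧ k = k' := by
  classical
  refine ⟨fun heq => ⟨?_, ?_⟩, fun ⟨hl, hk⟩ => hl ▸ hk ▸ rfl⟩
  · rw [← filter_ne_insertPair h k, heq, filter_ne_insertPair h']
  · rw [← idxOf_insertPair h hk, heq, idxOf_insertPair h' hk']

end List

open List

theorem isStirling_iff_sublist {b n : ℕ} {π : List ℕ} :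
    IsStirling b n π ↔ π.length = b * n ∧ (∀ v, 1 ≤ v → v ≤ n → π.count v = b) ∧
      (∀ v ∈ π, 1 ≤ v ∧ v ≤ n) ∧ ∀ x y, [x, y, x] <+ π → x ≤ y := by
  rw [IsStirling, forall_get_le_iff_forall_sublist]

theorem setOf_isStirling_zero (b : ℕ) : {π : List ℕ | IsStirling b 0 π} = {[]} := by
  ext π
  simp only [Set.mem_ofPred_eq, Set.mem_singleton_iff]
  constructor
  · exact fun hπ => length_eq_zero_iff.1 hπ.1
  · rintro rfl
    exact ⟨rfl, fun v h1 h0 => by omega, by simp, fun p => p.elim0⟩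

theorem IsStirling.succ_notMem {b n : ℕ} {π : List ℕ} (hπ : IsStirling b n π) : n + 1 ∉ π :=
  fun hm => by have := (hπ.2.2.1 _ hm).2; omega

theorem IsStirling.length_eq {b n : ℕ} {π : List ℕ} (hπ : IsStirling b n π) :
    π.length = b * n :=
  hπ.1

theorem isStirling_succ_content_iff {n : ℕ} {π l : List ℕ} (h : π ~ (n + 1) :: (n + 1) :: l) :
    (π.length = 2 * (n + 1) ∧ (∀ v, 1 ≤ v → v ≤ n + 1 → π.count v = 2) ∧
      ∀ v ∈ π, 1 ≤ v ∧ v ≤ n + 1) ↔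
    (l.length = 2 * n ∧ (∀ v, 1 ≤ v → v ≤ n → l.count v = 2) ∧ ∀ v ∈ l, 1 ≤ v ∧ v ≤ n) := by
  have hcount (v : ℕ) : π.count v = l.count v + if v = n + 1 then 2 else 0 := by
    rw [h.count_eq, count_cons, count_cons]; split_ifs <;> simp_all
  simp only [h.length_eq, h.mem_iff, mem_cons, hcount, length_cons]
  constructor
  · rintro ⟨hlen, hc, hm⟩
    have hnotMem : n + 1 ∉ l := count_eq_zero.1 (by simpa using hc (n + 1))
    refine ⟨by omega, fun v h1 h2 => by simpa [show v ≠ n + 1 by omega] using hc v h1 (by omega),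
      fun v hv => ?_⟩
    have := hm v (Or.inr (Or.inr hv))
    have : v ≠ n + 1 := ne_of_mem_of_not_mem hv hnotMem
    omega
  · rintro ⟨hlen, hc, hm⟩
    refine ⟨by omega, fun v h1 h2 => ?_, ?_⟩
    · by_cases hv : v = n + 1
      · have hnotMem : n + 1 ∉ l := fun hm' => absurd (hm _ hm').2 (by omega)
        simp [hv, count_eq_zero.2 hnotMem]
      · simpa [hv] using hc v h1 (by omega)
    · rintro v (rfl | rfl | hv)
      · omega
      · omega
      · have := hm v hv; omega

theorem IsStirling.insertPair {n : ℕ} {l : List ℕ} (hl : IsStirling 2 n l) (k : ℕ) :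
    IsStirling 2 (n + 1) (l.insertPair (n + 1) k) := by
  have hnotMem := hl.succ_notMem
  rw [isStirling_iff_sublist] at hl ⊢
  obtain ⟨hlen, hc, hm, hpat⟩ := hl
  obtain ⟨hlen', hc', hm'⟩ :=
    (isStirling_succ_content_iff (perm_insertPair (n + 1) k l)).2 ⟨hlen, hc, hm⟩
  refine ⟨hlen', hc', hm', fun x y hsub => ?_⟩
  by_cases hx : x = n + 1
  · exact absurd (hx ▸ hsub) (not_sublist_insertPair hnotMem k)
  by_cases hy : y = n + 1
  · exact hy ▸ (hm' x (hsub.subset (by simp))).2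
  have hfilter := hsub.filter (· ≠ n + 1)
  rw [filter_ne_insertPair hnotMem] at hfilter
  exact hpat x y (by simpa [hx, hy] using hfilter)

theorem IsStirling.exists_eq_append_cons_cons {n : ℕ} {π : List ℕ}
    (hπ : IsStirling 2 (n + 1) π) : ∃ A B, π = A ++ (n + 1) :: (n + 1) :: B ∧ n + 1 ∉ A ++ B := by
  obtain ⟨-, hc, hm, hpat⟩ := isStirling_iff_sublist.1 hπ
  have htwo : π.count (n + 1) = 2 := hc _ (by omega) le_rfl
  obtain ⟨A, C, B, rfl⟩ := exists_eq_append_cons_append_cons_of_sublist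
    (replicate_sublist_iff.2 htwo.ge)
  have hABC : n + 1 ∉ A ∧ n + 1 ∉ C ∧ n + 1 ∉ B := by
    simp only [count_append, count_cons_self] at htwo
    simp only [← count_eq_zero]
    omega
  obtain rfl : C = [] := eq_nil_iff_forall_not_mem.2 fun c hcC => by
    have hsub : [n + 1, c, n + 1] <+ A ++ (n + 1) :: (C ++ (n + 1) :: B) :=
      (((singleton_sublist.2 hcC).append (singleton_sublist.2 mem_cons_self)).cons_cons _).trans
        (sublist_append_right A _)
    have := hpat _ _ hsub
    have := (hm c (by simp [hcC])).2
    exact hABC.2.1 (by rwa [show c = n + 1 by omega] at hcC)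
  exact ⟨A, B, rfl, by simp [hABC.1, hABC.2.2]⟩

theorem IsStirling.exists_eq_insertPair {n : ℕ} {π : List ℕ} (hπ : IsStirling 2 (n + 1) π) :
    ∃ l k, IsStirling 2 n l ∧ k ≤ l.length ∧ π = l.insertPair (n + 1) k := by
  obtain ⟨A, B, rfl, hnotMem⟩ := hπ.exists_eq_append_cons_cons
  rw [← insertPair_length_append] at hπ ⊢
  refine ⟨A ++ B, A.length, ?_, by simp, rfl⟩
  obtain ⟨hlen, hc, hm, hpat⟩ := isStirling_iff_sublist.1 hπ
  obtain ⟨hlen', hc', hm'⟩ :=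
    (isStirling_succ_content_iff (perm_insertPair _ _ _)).1 ⟨hlen, hc, hm⟩
  refine isStirling_iff_sublist.2 ⟨hlen', hc', hm', fun x y hsub => hpat x y (hsub.trans ?_)⟩
  simpa only [filter_ne_insertPair hnotMem] using
    filter_sublist (p := (· ≠ n + 1)) (l := (A ++ B).insertPair (n + 1) A.length)

theorem ncard_setOf_isStirling_succ (n : ℕ) :
    {π | IsStirling 2 (n + 1) π}.ncard = (2 * n + 1) * {π | IsStirling 2 n π}.ncard := by
  rw [mul_comm, ← Set.ncard_Iio_nat (2 * n + 1), ← Set.ncard_prod, eq_comm]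
  refine Set.ncard_congr (fun p _ => p.1.insertPair (n + 1) p.2)
    (fun p hp => hp.1.insertPair p.2) (fun p q hp hq hpq => ?_) (fun π hπ => ?_)
  · have hgap {p : List ℕ × ℕ} (hp : p ∈ {l | IsStirling 2 n l} ×ˢ Set.Iio (2 * n + 1)) :
        p.2 ≤ p.1.length := by
      have := hp.1.length_eq; have := Set.mem_Iio.1 hp.2; omega
    obtain ⟨hl, hk⟩ := (insertPair_inj hp.1.succ_notMem hq.1.succ_notMem (hgap hp) (hgap hq)).1 hpq
    exact Prod.ext hl hk
  · obtain ⟨l, k, hl, hk, rfl⟩ := IsStirling.exists_eq_insertPair hπ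
    have := hl.length_eq
    exact ⟨(l, k), ⟨hl, Set.mem_Iio.2 (by omega)⟩, rfl⟩

theorem count_two_stirling_general (n : ℕ) :
    Set.ncard {π : List ℕ | IsStirling 2 n π} = Nat.doubleFactorial (2 * n - 1) := by
  induction n with
  -- `2 * 0 - 1 = 0` and `0‼ = 1`: the empty permutation is counted once.
  | zero => rw [setOf_isStirling_zero, Set.ncard_singleton]; rfl
  | succ n ih =>
    rw [ncard_setOf_isStirling_succ, ih, show 2 * (n + 1) - 1 = 2 * n + 1 by omega,
      Nat.doubleFactorial_add_one]

/-- the number of 2-Stirling permutations of size `n` equals the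
double factorial `(2n-1)!! = 1·3·5⋯(2n-1)`. -/
theorem count_two_stirling (n : ℕ) (hn : 0 < n) :
    Set.ncard {π : List ℕ | IsStirling 2 n π} = Nat.doubleFactorial (2 * n - 1) :=
  count_two_stirling_general n
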